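/- Let φ be a Prompt-LTL formula over P with partition (I,O). Then φ is realizable (i.e., some strategy σ : (2^I)^+ → 2^O realizes φ with respect to some bound k) if and only if there exists k ≥ 1 such that the LTL formula rel(φ) ∧ ψ_k is realizable over the partition (I, O∪{p}). -/

import Mathlib

namespace PromptPaper

/-- Prompt-LTL formulas (in negation normal form) over atomic propositions of type `α`. -/
inductive Formula (α : Type) : Type
  | atom    : α → Formula α
  | natom   : α → Formula α
  | and     : Formula α → Formula α → Formula α
  | or      : Formula α → Formula α → Formula α
  | next    : Formula α → Formula α
  | untl    : Formula α → Formula α → Formula α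
  | release : Formula α → Formula α → Formula α
  | promptF : Formula α → Formula α

variable {α ι ο π : Type}

/-- Satisfaction `(w, n, k) ⊨ φ` (arguments: word `w`, bound `k`, position `n`, formula `φ`). -/
def Sat (w : ℕ → Set α) (k : ℕ) : ℕ → Formula α → Prop
  | n, .atom a => a ∈ w n
  | n, .natom a => a ∉ w n
  | n, .and φ ψ => Sat w k n φ ∧ Sat w k n ψ
  | n, .or φ ψ => Sat w k n φ ∨ Sat w k n ψ
  | n, .next φ => Sat w k (n + 1) φ
  | n, .untl φ ψ => ∃ j : ℕ, Sat w k (n + j) ψ ∧ ∀ m < j, Sat w k (n + m) φ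
  | n, .release φ ψ => ∀ j : ℕ, Sat w k (n + j) ψ ∨ ∃ m < j, Sat w k (n + m) φ
  | n, .promptF φ => ∃ j ≤ k, Sat w k (n + j) φ

/-- A formula is an LTL formula if it contains no prompt eventually operator. -/
def isLTL : Formula α → Prop
  | .atom _ => True
  | .natom _ => True
  | .and φ ψ => isLTL φ ∧ isLTL ψ
  | .or φ ψ => isLTL φ ∧ isLTL ψ
  | .next φ => isLTL φ
  | .untl φ ψ => isLTL φ ∧ isLTL ψ
  | .release φ ψ => isLTL φ ∧ isLTL ψ
  | .promptF _ => False

/-- The set of subformulas of a formula. -/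
def subf : Formula α → Set (Formula α)
  | .atom a => {Formula.atom a}
  | .natom a => {Formula.natom a}
  | .and φ ψ => insert (Formula.and φ ψ) (subf φ ∪ subf ψ)
  | .or φ ψ => insert (Formula.or φ ψ) (subf φ ∪ subf ψ)
  | .next φ => insert (Formula.next φ) (subf φ)
  | .untl φ ψ => insert (Formula.untl φ ψ) (subf φ ∪ subf ψ)
  | .release φ ψ => insert (Formula.release φ ψ) (subf φ ∪ subf ψ)
  | .promptF φ => insert (Formula.promptF φ) (subf φ)

/-- The size `|φ|` of a formula: the number of its subformulas. -/
noncomputable def size (φ : Formula α) : ℕ := (subf φ).ncard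

/-- Relativization `rel(φ)`; the fresh proposition `p ∉ P` is modelled by `none : Option α`. -/
def rel : Formula α → Formula (Option α)
  | .atom a => .atom (some a)
  | .natom a => .natom (some a)
  | .and φ ψ => .and (rel φ) (rel ψ)
  | .or φ ψ => .or (rel φ) (rel ψ)
  | .next φ => .next (rel φ)
  | .untl φ ψ => .untl (rel φ) (rel ψ)
  | .release φ ψ => .release (rel φ) (rel ψ)
  | .promptF φ =>
      .and
        (.or (.natom none) (.untl (.atom none) (.untl (.natom none) (rel φ))))
        (.or (.atom none) (.untl (.natom none) (.untl (.atom none) (rel φ))))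

/-- `w'` is a `p`-coloring of `w`: both agree on all propositions in `P`. -/
def IsColoring (w' : ℕ → Set (Option α)) (w : ℕ → Set α) : Prop :=
  ∀ n a, some a ∈ w' n ↔ a ∈ w n

/-- `n` is a change point of `w'`. -/
def ChangePoint (w' : ℕ → Set (Option α)) (n : ℕ) : Prop :=
  n = 0 ∨ ¬ ((none ∈ w' (n - 1)) ↔ (none ∈ w' n))

/-- `m` and `m'` are adjacent change points (the `p`-block between them has length `m' - m`). -/
def AdjacentCP (w' : ℕ → Set (Option α)) (m m' : ℕ) : Prop :=
  m < m' ∧ ChangePoint w' m ∧ ChangePoint w' m' ∧ ∀ l, m < l → l < m' → ¬ ChangePoint w' l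

/-- The truth value of `p` changes infinitely often in `w'`. -/
def InfCP (w' : ℕ → Set (Option α)) : Prop := ∀ n, ∃ m, n < m ∧ ChangePoint w' m

/-- `w'` is `k`-spaced. -/
def Spaced (k : ℕ) (w' : ℕ → Set (Option α)) : Prop :=
  InfCP w' ∧ ∀ m m', AdjacentCP w' m m' → k ≤ m' - m

/-- `w'` is `k`-bounded. -/
def Bounded (k : ℕ) (w' : ℕ → Set (Option α)) : Prop :=
  InfCP w' ∧ ∀ m m', AdjacentCP w' m m' → m' - m ≤ k

/-- The play consistent with strategy `σ` on input sequence `i`; `fi` and `fo` embed input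
and output propositions into the full set of propositions. -/
def play (fi : ι → π) (fo : ο → π) (i : ℕ → Set ι) (σ : List (Set ι) → Set ο) (n : ℕ) :
    Set π :=
  fi '' i n ∪ fo '' σ ((List.range (n + 1)).map i)

/-- `σ` realizes `φ` with respect to `k`: every consistent play satisfies `φ` w.r.t. `k`. -/
def Realizes (fi : ι → π) (fo : ο → π) (σ : List (Set ι) → Set ο) (k : ℕ)
    (φ : Formula π) : Prop :=
  ∀ i : ℕ → Set ι, Sat (play fi fo i σ) k 0 φ

/-- `upd*`, the extension of `upd` to finite input sequences. -/
def updStar {M : Type} (upd : M → Set ι → M) (m0 : M) (l : List (Set ι)) : M :=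
  l.foldl upd m0

/-- The memory structure `(M, m0, upd)` together with next-move function `nxt` implements `σ`. -/
def Implements {M : Type} (m0 : M) (upd : M → Set ι → M) (nxt : M → Set ι → Set ο)
    (σ : List (Set ι) → Set ο) : Prop :=
  ∀ (l : List (Set ι)) (i : Set ι), σ (l ++ [i]) = nxt (updStar upd m0 l) i

/-- `σ` is a finite-state strategy of size at most `n`. -/
def SizeAtMost (σ : List (Set ι) → Set ο) (n : ℕ) : Prop :=
  ∃ (M : Type) (_ : Fintype M) (m0 : M) (upd : M → Set ι → M) (nxt : M → Set ι → Set ο),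
    Fintype.card M ≤ n ∧ Implements m0 upd nxt σ

/-- The set of realizable parameters `R(φ)` over the partition `(ι, ο)`. -/
def RealParams (φ : Formula (ι ⊕ ο)) : Set (ℕ × ℕ) :=
  {nk : ℕ × ℕ | ∃ σ : List (Set ι) → Set ο,
    SizeAtMost σ nk.1 ∧ Realizes Sum.inl Sum.inr σ nk.2 φ}

/-- `(n, k)` is a Pareto position of `φ` (conditions on `n - 1` resp. `k - 1` are vacuously
true if `n = 0` resp. `k = 0`). -/
def Pareto (φ : Formula (ι ⊕ ο)) (n k : ℕ) : Prop :=
  (n, k) ∈ RealParams φ ∧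
    (n = 0 ∨ (n - 1, k) ∉ RealParams φ) ∧
    (k = 0 ∨ (n, k - 1) ∉ RealParams φ)

/-- `true` as a formula (relative to a fixed atomic proposition `a`). -/
def ltrue (a : α) : Formula α := .or (.atom a) (.natom a)

/-- `false` as a formula (relative to a fixed atomic proposition `a`). -/
def lfalse (a : α) : Formula α := .and (.atom a) (.natom a)

/-- `F φ = true U φ`. -/
def ev (a : α) (φ : Formula α) : Formula α := .untl (ltrue a) φ

/-- `G φ = false R φ`. -/
def glob (a : α) (φ : Formula α) : Formula α := .release (lfalse a) φ

/-- Conjunction of a list of formulas. -/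
def conj (a : α) (l : List (Formula α)) : Formula α := l.foldr Formula.and (ltrue a)

/-- The arbiter formula `φ_{r, rp}`, with `I = {q_1, …, q_r}` modelled as `Sum.inl`-side and
`O = {p_1, …, p_r}` as `Sum.inr`-side of `Fin r ⊕ Fin r`. -/
def arbiter (r rp : ℕ) (hr : 0 < r) : Formula (Fin r ⊕ Fin r) :=
  let q : Fin r → Fin r ⊕ Fin r := Sum.inl
  let pr : Fin r → Fin r ⊕ Fin r := Sum.inr
  let a0 : Fin r ⊕ Fin r := Sum.inl ⟨0, hr⟩
  Formula.and
    (conj a0 (((List.finRange r).filter (fun i => decide (i.val < rp))).map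
      (fun i => glob a0 (Formula.or (.natom (q i)) (.promptF (.atom (pr i)))))))
    (Formula.and
      (conj a0 (((List.finRange r).filter (fun i => decide (rp ≤ i.val))).map
        (fun i => glob a0 (Formula.or (.natom (q i)) (ev a0 (.atom (pr i)))))))
      (conj a0 ((List.finRange r).flatMap (fun i =>
        ((List.finRange r).filter (fun j => decide (i ≠ j))).map
          (fun j => glob a0 (Formula.or (.natom (pr i)) (.natom (pr j))))))))

/-!
Relativization replaces the bound of each prompt eventually by "before the second change of `p`".
If `σ` realizes `φ` with bound `k`, let the output player also toggle `p` every `k` rounds: the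
resulting plays are `k`-spaced, so every witness at most `k` steps ahead lies before the second
change of `p`, and `rel φ` holds; they are also `k`-bounded. Conversely, on a `k`-bounded play two
consecutive `p`-blocks span at most `2k` positions, so a strategy for `rel φ ∧ ψ_k` with `p`
dropped realizes `φ` with bound `2k`.
-/

theorem Sat.mono_bound {w : ℕ → Set α} {k k' : ℕ} (hk : k ≤ k') {φ : Formula α} {n : ℕ}
    (h : Sat w k n φ) : Sat w k' n φ := by
  induction φ generalizing n with
  | atom | natom => exact h
  | and _ _ ih₁ ih₂ => exact ⟨ih₁ h.1, ih₂ h.2⟩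
  | or _ _ ih₁ ih₂ => exact h.imp ih₁ ih₂
  | next _ ih => exact ih h
  | untl _ _ ih₁ ih₂ =>
    obtain ⟨j, hj, hlt⟩ := h
    exact ⟨j, ih₂ hj, fun m hm => ih₁ (hlt m hm)⟩
  | release _ _ ih₁ ih₂ =>
    exact fun j => (h j).imp ih₂ fun ⟨m, hm, h⟩ => ⟨m, hm, ih₁ h⟩
  | promptF _ ih =>
    obtain ⟨j, hj, h⟩ := h
    exact ⟨j, hj.trans hk, ih h⟩

theorem sat_iterate_next {w : ℕ → Set α} {k : ℕ} (φ : Formula α) (j n : ℕ) :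
    Sat w k n (Formula.next^[j] φ) ↔ Sat w k (n + j) φ := by
  induction j generalizing n with
  | zero => rfl
  | succ j ih =>
    rw [Function.iterate_succ_apply']
    exact (ih (n + 1)).trans (by rw [show n + 1 + j = n + (j + 1) by omega])

theorem isLTL_iterate_next {φ : Formula α} (h : isLTL φ) (j : ℕ) :
    isLTL (Formula.next^[j] φ) := by
  induction j generalizing φ with
  | zero => exact h
  | succ j ih => exact ih h

theorem sat_glob {w : ℕ → Set α} {k : ℕ} (a : α) (φ : Formula α) (n : ℕ) :
    Sat w k n (glob a φ) ↔ ∀ j, Sat w k (n + j) φ :=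
  forall_congr' fun _ => or_iff_left fun ⟨_, _, h⟩ => h.2 h.1

theorem sat_foldr_or {w : ℕ → Set α} {k : ℕ} (a : α) (l : List (Formula α)) (n : ℕ) :
    Sat w k n (l.foldr .or (lfalse a)) ↔ ∃ φ ∈ l, Sat w k n φ := by
  induction l with
  | nil => exact iff_of_false (fun h => h.2 h.1) (by simp)
  | cons φ l ih => exact (or_congr_right ih).trans (by simp)

theorem isLTL_foldr_or (a : α) {l : List (Formula α)} (h : ∀ φ ∈ l, isLTL φ) :
    isLTL (l.foldr .or (lfalse a)) := by
  induction l with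
  | nil => exact ⟨trivial, trivial⟩
  | cons φ l ih => exact ⟨h φ (by simp), ih fun ψ hψ => h ψ (by simp [hψ])⟩

section ChangePoints

variable {w' : ℕ → Set (Option α)}

theorem iff_of_forall_not_changePoint {a b : ℕ} (hab : a ≤ b)
    (h : ∀ l, a < l → l ≤ b → ¬ChangePoint w' l) : (none ∈ w' b ↔ none ∈ w' a) := by
  induction b, hab using Nat.le_induction with
  | base => rfl
  | succ b hab ih =>
    have hb : ¬ChangePoint w' (b + 1) := h (b + 1) (by omega) le_rfl
    rw [ChangePoint, not_or, Nat.add_sub_cancel, not_not] at hb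
    exact hb.2.symm.trans (ih fun l h₁ h₂ => h l h₁ (by omega))

theorem exists_changePoint_of_not_iff {a b : ℕ} (hab : a ≤ b)
    (h : ¬(none ∈ w' b ↔ none ∈ w' a)) : ∃ l, a < l ∧ l ≤ b ∧ ChangePoint w' l := by
  by_contra! hno
  exact h (iff_of_forall_not_changePoint hab hno)

theorem AdjacentCP.iff_left {m m' l : ℕ} (h : AdjacentCP w' m m') (hml : m ≤ l) (hlm' : l < m') :
    none ∈ w' l ↔ none ∈ w' m :=
  iff_of_forall_not_changePoint hml fun l' h₁ h₂ => h.2.2.2 l' h₁ (by omega)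

theorem AdjacentCP.not_iff_right {m m' l : ℕ} (h : AdjacentCP w' m m') (hml : m ≤ l)
    (hlm' : l < m') : ¬(none ∈ w' m' ↔ none ∈ w' l) := by
  rcases h.2.2.1 with h0 | hne
  · omega
  rw [h.iff_left hml hlm', ← h.iff_left (l := m' - 1) (by omega) (by omega)]
  exact fun hiff => hne hiff.symm

theorem InfCP.exists_adjacentCP (h : InfCP w') (n : ℕ) :
    ∃ m m', AdjacentCP w' m m' ∧ m ≤ n ∧ n < m' := by
  classical
  have hnext : ∃ t, n < t ∧ ChangePoint w' t := h n
  have hlast : Nat.findGreatest (ChangePoint w') n ≤ n := Nat.findGreatest_le n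
  obtain ⟨hn, hcp⟩ := Nat.find_spec hnext
  refine ⟨_, _, ⟨by omega, Nat.findGreatest_spec (Nat.zero_le n) (Or.inl rfl), hcp,
    fun l h₁ h₂ hl => ?_⟩, hlast, hn⟩
  rcases le_or_gt l n with hln | hnl
  · exact Nat.findGreatest_is_greatest h₁ hln hl
  · exact Nat.find_min hnext h₂ ⟨hnl, hl⟩

theorem Spaced.exists_switch {k : ℕ} (hs : Spaced k w') (n : ℕ) :
    ∃ c, n < c ∧ (∀ m, n ≤ m → m < c → (none ∈ w' m ↔ none ∈ w' n)) ∧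
      ∀ m, c ≤ m → m ≤ n + k → ¬(none ∈ w' m ↔ none ∈ w' n) := by
  obtain ⟨a, c, hac, han, hnc⟩ := hs.1.exists_adjacentCP n
  obtain ⟨c', d, hcd, hc'c, hcd'⟩ := hs.1.exists_adjacentCP c
  obtain rfl : c' = c := by
    by_contra hne
    exact hcd.2.2.2 c (by omega) hcd' hac.2.2.1
  have hk : k ≤ d - c' := hs.2 _ _ hcd
  refine ⟨c', hnc, fun m h₁ h₂ => (hac.iff_left (by omega) h₂).trans (hac.iff_left han hnc).symm,
    fun m h₁ h₂ => ?_⟩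
  rw [hcd.iff_left h₁ (by omega)]
  exact hac.not_iff_right han hnc

def ChangesWithin (k : ℕ) (w' : ℕ → Set (Option α)) : Prop :=
  ∀ n, ∃ j, 0 < j ∧ j ≤ k ∧ ¬(none ∈ w' (n + j) ↔ none ∈ w' n)

theorem bounded_iff_changesWithin {k : ℕ} : Bounded k w' ↔ ChangesWithin k w' := by
  constructor
  · rintro ⟨hinf, hblk⟩ n
    obtain ⟨m, m', hadj, hmn, hnm'⟩ := hinf.exists_adjacentCP n
    have hk : m' - m ≤ k := hblk m m' hadj
    refine ⟨m' - n, by omega, by omega, ?_⟩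
    rw [Nat.add_sub_cancel' hnm'.le]
    exact hadj.not_iff_right hmn hnm'
  · intro hc
    refine ⟨fun n => ?_, fun m m' hadj => ?_⟩
    · obtain ⟨j, hj₀, -, hj⟩ := hc n
      obtain ⟨l, hnl, -, hl⟩ := exists_changePoint_of_not_iff (Nat.le_add_right n j) hj
      exact ⟨l, hnl, hl⟩
    · by_contra! hkm
      obtain ⟨j, -, hjk, hj⟩ := hc m
      obtain ⟨l, hml, hlj, hl⟩ := exists_changePoint_of_not_iff (Nat.le_add_right m j) hj
      exact hadj.2.2.2 l hml (by omega) hl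

theorem ChangesWithin.le_of_forall_iff {k : ℕ} (h : ChangesWithin k w') {a J : ℕ}
    (hJ : ∀ m < J, (none ∈ w' (a + m) ↔ none ∈ w' a)) : J ≤ k := by
  obtain ⟨j, -, hjk, hj⟩ := h a
  by_contra! hkJ
  exact hj (hJ j (by omega))

end ChangePoints

def changesAfter (j : ℕ) : Formula (Option α) :=
  .or (.and (.atom none) (Formula.next^[j] (.natom none)))
    (.and (.natom none) (Formula.next^[j] (.atom none)))

theorem sat_changesAfter {w' : ℕ → Set (Option α)} {k : ℕ} (j n : ℕ) :
    Sat w' k n (changesAfter j) ↔ ¬(none ∈ w' (n + j) ↔ none ∈ w' n) := by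
  show (_ ∧ _) ∨ (_ ∧ _) ↔ _
  rw [sat_iterate_next, sat_iterate_next]
  show (none ∈ w' n ∧ none ∉ w' (n + j)) ∨ (none ∉ w' n ∧ none ∈ w' (n + j)) ↔ _
  tauto

/-- The formula `ψ_k = G ⋁_{1 ≤ j ≤ k} ¬(p ↔ X^j p)`. -/
def boundedFormula (k : ℕ) : Formula (Option α) :=
  glob none (((List.range k).map fun j => changesAfter (j + 1)).foldr .or (lfalse none))

theorem sat_boundedFormula {w' : ℕ → Set (Option α)} {k : ℕ} :
    Sat w' 0 0 (boundedFormula k) ↔ Bounded k w' := by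
  rw [bounded_iff_changesWithin, boundedFormula, sat_glob]
  refine forall_congr' fun n => ?_
  simp only [sat_foldr_or, List.mem_map, List.mem_range, Nat.zero_add]
  constructor
  · rintro ⟨_, ⟨j, hj, rfl⟩, h⟩
    exact ⟨j + 1, j.succ_pos, hj, (sat_changesAfter _ _).1 h⟩
  · rintro ⟨j, hj₀, hjk, h⟩
    refine ⟨_, ⟨j - 1, by omega, rfl⟩, (sat_changesAfter _ _).2 ?_⟩
    rwa [Nat.sub_add_cancel hj₀]

theorem isLTL_boundedFormula (k : ℕ) : isLTL (boundedFormula k : Formula (Option α)) := by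
  refine ⟨⟨trivial, trivial⟩, isLTL_foldr_or _ ?_⟩
  simp only [List.mem_map, List.mem_range]
  rintro _ ⟨j, -, rfl⟩
  exact ⟨⟨trivial, isLTL_iterate_next (φ := .natom none) trivial _⟩,
    ⟨trivial, isLTL_iterate_next (φ := .atom none) trivial _⟩⟩

theorem sat_untl_untl_of_switch {w : ℕ → Set α} {b k n c j : ℕ} {A B r : Formula α}
    (hnc : n < c) (hA : ∀ m, n ≤ m → m < c → Sat w b m A)
    (hB : ∀ m, c ≤ m → m ≤ n + k → Sat w b m B) (hjk : j ≤ k) (hr : Sat w b (n + j) r) :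
    Sat w b n (.untl A (.untl B r)) := by
  by_cases hjc : n + j < c
  · exact ⟨j, ⟨0, hr, fun m hm => absurd hm (Nat.not_lt_zero m)⟩,
      fun m hm => hA _ (by omega) (by omega)⟩
  · refine ⟨c - n, ⟨n + j - c, ?_, fun m hm => hB _ (by omega) (by omega)⟩,
      fun m hm => hA _ (by omega) (by omega)⟩
    rwa [show n + (c - n) + (n + j - c) = n + j by omega]

theorem sat_rel_of_spaced {w : ℕ → Set α} {w' : ℕ → Set (Option α)} {k : ℕ}
    (hc : IsColoring w' w) (hs : Spaced k w') {φ : Formula α} {n : ℕ} (h : Sat w k n φ) :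
    Sat w' 0 n (rel φ) := by
  induction φ generalizing n with
  | atom a => exact (hc n a).2 h
  | natom a => exact fun ha => h ((hc n a).1 ha)
  | and _ _ ih₁ ih₂ => exact ⟨ih₁ h.1, ih₂ h.2⟩
  | or _ _ ih₁ ih₂ => exact h.imp ih₁ ih₂
  | next _ ih => exact ih h
  | untl _ _ ih₁ ih₂ =>
    obtain ⟨j, hj, hlt⟩ := h
    exact ⟨j, ih₂ hj, fun m hm => ih₁ (hlt m hm)⟩
  | release _ _ ih₁ ih₂ =>
    exact fun j => (h j).imp ih₂ fun ⟨m, hm, h⟩ => ⟨m, hm, ih₁ h⟩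
  | promptF _ ih =>
    obtain ⟨j, hjk, hj⟩ := h
    obtain ⟨c, hnc, hsame, hflip⟩ := hs.exists_switch n
    by_cases hp : none ∈ w' n
    · refine ⟨.inr (sat_untl_untl_of_switch hnc (fun m h₁ h₂ => (hsame m h₁ h₂).2 hp)
        (fun m h₁ h₂ hm => hflip m h₁ h₂ (iff_of_true hm hp)) hjk (ih hj)), .inl hp⟩
    · refine ⟨.inl hp, .inr (sat_untl_untl_of_switch hnc
        (fun m h₁ h₂ hm => hp ((hsame m h₁ h₂).1 hm))
        (fun m h₁ h₂ => not_not.1 fun hm => hflip m h₁ h₂ (iff_of_false hm hp)) hjk (ih hj))⟩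

theorem exists_le_sat_of_untl_untl {w' : ℕ → Set (Option α)} {b k n : ℕ}
    {A B r : Formula (Option α)} (hch : ChangesWithin k w')
    (h : Sat w' b n (.untl A (.untl B r)))
    (hA : ∀ m, Sat w' b m A → (none ∈ w' m ↔ none ∈ w' n))
    (hB : ∀ m, Sat w' b m B → ¬(none ∈ w' m ↔ none ∈ w' n)) : ∃ j ≤ 2 * k, Sat w' b (n + j) r := by
  obtain ⟨j₁, ⟨j₂, hr, hj₂⟩, hj₁⟩ := h
  have h₁ : j₁ ≤ k := hch.le_of_forall_iff fun m hm => hA _ (hj₁ m hm)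
  have h₂ : j₂ ≤ k := hch.le_of_forall_iff (a := n + j₁) fun m hm => by
    have hm := hB _ (hj₂ m hm)
    have h0 := hB _ (hj₂ 0 (by omega))
    rw [Nat.add_zero] at h0
    tauto
  exact ⟨j₁ + j₂, by omega, by rwa [← Nat.add_assoc]⟩

theorem sat_of_sat_rel {w : ℕ → Set α} {w' : ℕ → Set (Option α)} {k : ℕ}
    (hc : IsColoring w' w) (hb : Bounded k w') {φ : Formula α} {n : ℕ}
    (h : Sat w' 0 n (rel φ)) : Sat w (2 * k) n φ := by
  induction φ generalizing n with
  | atom a => exact (hc n a).1 h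
  | natom a => exact fun ha => h ((hc n a).2 ha)
  | and _ _ ih₁ ih₂ => exact ⟨ih₁ h.1, ih₂ h.2⟩
  | or _ _ ih₁ ih₂ => exact h.imp ih₁ ih₂
  | next _ ih => exact ih h
  | untl _ _ ih₁ ih₂ =>
    obtain ⟨j, hj, hlt⟩ := h
    exact ⟨j, ih₂ hj, fun m hm => ih₁ (hlt m hm)⟩
  | release _ _ ih₁ ih₂ =>
    exact fun j => (h j).imp ih₂ fun ⟨m, hm, h⟩ => ⟨m, hm, ih₁ h⟩
  | promptF φ ih =>
    have hch := bounded_iff_changesWithin.1 hb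
    obtain ⟨h₁, h₂⟩ := h
    suffices ∃ j ≤ 2 * k, Sat w' 0 (n + j) (rel φ) from
      let ⟨j, hj, hr⟩ := this; ⟨j, hj, ih hr⟩
    by_cases hp : none ∈ w' n
    · exact exists_le_sat_of_untl_untl hch (h₁.resolve_left (not_not.2 hp))
        (fun m hm => iff_of_true hm hp) (fun m hm hiff => hm (hiff.2 hp))
    · exact exists_le_sat_of_untl_untl hch (h₂.resolve_left hp)
        (fun m hm => iff_of_false hm hp) (fun m hm hiff => hp (hiff.1 hm))

section Blocks

variable {w' : ℕ → Set (Option α)} {k : ℕ}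

theorem changePoint_iff_dvd (hw : ∀ n, none ∈ w' n ↔ Even (n / k)) (m : ℕ) :
    ChangePoint w' m ↔ k ∣ m := by
  cases m with
  | zero => simp [ChangePoint]
  | succ m =>
    simp only [ChangePoint, Nat.add_one_ne_zero, false_or, Nat.add_sub_cancel, hw, Nat.succ_div]
    split_ifs with h
    · simp only [h, iff_true, Nat.even_add_one]
      tauto
    · simp only [h, Nat.add_zero, iff_false]
      tauto

theorem infCP_of_iff_even_div (hk : 0 < k) (hw : ∀ n, none ∈ w' n ↔ Even (n / k)) :
    InfCP w' := fun n =>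
  ⟨k * (n + 1), by nlinarith, (changePoint_iff_dvd hw _).2 (dvd_mul_right k _)⟩

theorem spaced_of_iff_even_div (hk : 0 < k) (hw : ∀ n, none ∈ w' n ↔ Even (n / k)) :
    Spaced k w' :=
  ⟨infCP_of_iff_even_div hk hw, fun m m' ⟨hlt, hm, hm', _⟩ =>
    Nat.le_of_dvd (by omega)
      (Nat.dvd_sub ((changePoint_iff_dvd hw _).1 hm') ((changePoint_iff_dvd hw _).1 hm))⟩

theorem bounded_of_iff_even_div (hk : 0 < k) (hw : ∀ n, none ∈ w' n ↔ Even (n / k)) :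
    Bounded k w' :=
  ⟨infCP_of_iff_even_div hk hw, fun m m' ⟨hlt, hm, _, hbetween⟩ => by
    by_contra! h
    exact hbetween (m + k) (by omega) (by omega)
      ((changePoint_iff_dvd hw _).2 (Nat.dvd_add ((changePoint_iff_dvd hw _).1 hm) dvd_rfl))⟩

end Blocks

section Strategies

variable (fi : ι → π) (fo : ο → π) (i : ℕ → Set ι)

theorem isColoring_play (σ' : List (Set ι) → Set (Option ο)) :
    IsColoring (play (fun a => some (fi a)) (Option.map fo) i σ')
      (play fi fo i fun l => some ⁻¹' σ' l) := by
  intro n a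
  simp [play, Option.map_eq_some_iff]

theorem none_mem_play (σ' : List (Set ι) → Set (Option ο)) (n : ℕ) :
    none ∈ play (fun a => some (fi a)) (Option.map fo) i σ' n ↔
      none ∈ σ' ((List.range (n + 1)).map i) := by
  simp [play]

/-- `l.length - 1` is the index of the current round, so `p` is set in round `n` iff `n / k` is
even. -/
def withBlocks (k : ℕ) (σ : List (Set ι) → Set ο) (l : List (Set ι)) : Set (Option ο) :=
  some '' σ l ∪ {x | x = none ∧ Even ((l.length - 1) / k)}

theorem isColoring_play_withBlocks (k : ℕ) (σ : List (Set ι) → Set ο) :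
    IsColoring (play (fun a => some (fi a)) (Option.map fo) i (withBlocks k σ))
      (play fi fo i σ) := by
  have hσ : (fun l => some ⁻¹' withBlocks k σ l) = σ := by
    ext l x
    simp [withBlocks]
  simpa only [hσ] using isColoring_play fi fo i (withBlocks k σ)

theorem none_mem_play_withBlocks (k : ℕ) (σ : List (Set ι) → Set ο) (n : ℕ) :
    none ∈ play (fun a => some (fi a)) (Option.map fo) i (withBlocks k σ) n ↔ Even (n / k) := by
  simp [none_mem_play, withBlocks]

end Strategies

theorem realizable_iff_rel_realizable_general (ι ο : Type)
    (φ : Formula (ι ⊕ ο)) :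
    (∃ (σ : List (Set ι) → Set ο) (k : ℕ), Realizes Sum.inl Sum.inr σ k φ) ↔
    (∃ k : ℕ, 1 ≤ k ∧ ∀ ψ : Formula (Option (ι ⊕ ο)),
      isLTL ψ → (∀ w' : ℕ → Set (Option (ι ⊕ ο)), Sat w' 0 0 ψ ↔ Bounded k w') →
      ∃ σ' : List (Set ι) → Set (Option ο),
        Realizes (fun a => some (Sum.inl a)) (Option.map Sum.inr) σ' 0
          (Formula.and (rel φ) ψ)) := by
  constructor
  · rintro ⟨σ, k, hσ⟩
    refine ⟨k + 1, Nat.le_add_left 1 k, fun ψ _ hψ => ⟨withBlocks (k + 1) σ, fun i => ?_⟩⟩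
    have hw := none_mem_play_withBlocks Sum.inl Sum.inr i (k + 1) σ
    exact ⟨sat_rel_of_spaced (isColoring_play_withBlocks _ _ i _ σ)
      (spaced_of_iff_even_div k.succ_pos hw) ((hσ i).mono_bound k.le_succ),
      (hψ _).2 (bounded_of_iff_even_div k.succ_pos hw)⟩
  · rintro ⟨k, -, hk⟩
    obtain ⟨σ', hσ'⟩ := hk (boundedFormula k) (isLTL_boundedFormula k) fun _ => sat_boundedFormula
    exact ⟨fun l => some ⁻¹' σ' l, 2 * k, fun i =>
      sat_of_sat_rel (isColoring_play _ _ i σ') (sat_boundedFormula.1 (hσ' i).2) (hσ' i).1⟩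

/-- `φ` is realizable w.r.t. some bound if and only if there is a `k ≥ 1`
such that the LTL formula `rel(φ) ∧ ψ_k` is realizable over the partition `(I, O ∪ {p})`. -/
theorem realizable_iff_rel_realizable (ι ο : Type) [Fintype ι] [Fintype ο]
    (φ : Formula (ι ⊕ ο)) :
    (∃ (σ : List (Set ι) → Set ο) (k : ℕ), Realizes Sum.inl Sum.inr σ k φ) ↔
    (∃ k : ℕ, 1 ≤ k ∧ ∀ ψ : Formula (Option (ι ⊕ ο)),
      isLTL ψ → (∀ w' : ℕ → Set (Option (ι ⊕ ο)), Sat w' 0 0 ψ ↔ Bounded k w') →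
      ∃ σ' : List (Set ι) → Set (Option ο),
        Realizes (fun a => some (Sum.inl a)) (Option.map Sum.inr) σ' 0
          (Formula.and (rel φ) ψ)) :=
  realizable_iff_rel_realizable_general ι ο φ

end PromptPaper
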